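/- arXiv:1710.05103 — 3 statements merged into one kernel-verified Lean document; each statement's English description precedes it below -/
import Mathlib

section
/- Let a_{n,μ} be the number of Lyndon words of length n with evaluation μ (i.e., having μ_j occurrences of letter j). Then the total number of length-n words with evaluation μ equals the sum over divisors d of m = gcd(μ₁, μ₂, …) of (n/d)·a_{n/d, μ/d}. -/
/-- A word is Lyndon if it is lexicographically strictly smaller than all of its
non-trivial cyclic shifts. -/
def IsLyndon (w : List ℕ) : Prop :=
  ∀ k : ℕ, 0 < k → k < w.length → List.Lex (· < ·) w (w.rotate k)

/-!
Every nonempty word is uniquely a power `u ^ d = (replicate d u).flatten` of a primitive word `u`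
(one fixed by no nontrivial rotation): `u` is the prefix whose length is the least rotation period
of the word. Every primitive word of length `p` is `ℓ.rotate r` for a unique Lyndon word `ℓ`
(its least rotation) and a unique `r < p`. Since `u ^ d` has evaluation `μ` iff `d` divides every
`μⱼ` and `u` has evaluation `μ / d`, grouping the words by `d` gives the formula.
-/

namespace List

variable {α : Type*}

def IsPrimitive (u : List α) : Prop :=
  ∀ k, 0 < k → k < u.length → u.rotate k ≠ u

theorem flatten_replicate_append_swap (a b : List α) (d : ℕ) :
    (replicate d (a ++ b)).flatten ++ a = a ++ (replicate d (b ++ a)).flatten := by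
  induction d with
  | zero => simp
  | succ d ih => simp [replicate_succ, ih]

theorem rotate_flatten_replicate {u : List α} {k : ℕ} (hk : k ≤ u.length) (d : ℕ) :
    (replicate d u).flatten.rotate k = (replicate d (u.rotate k)).flatten := by
  rw [rotate_eq_drop_append_take hk]
  conv_lhs => rw [← take_append_drop k u]
  cases d with
  | zero => simp
  | succ d =>
    have hrot := rotate_append_length_eq (take k u)
      (drop k u ++ (replicate d (take k u ++ drop k u)).flatten)
    rw [length_take_of_le hk] at hrot
    rw [replicate_succ, flatten_cons, append_assoc, hrot, append_assoc,
      flatten_replicate_append_swap, replicate_succ, flatten_cons, append_assoc]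

theorem length_flatten_replicate (u : List α) (d : ℕ) :
    (replicate d u).flatten.length = d * u.length := by
  simp

theorem count_flatten_replicate [BEq α] (u : List α) (d : ℕ) (a : α) :
    (replicate d u).flatten.count a = d * u.count a := by
  simp [count_flatten]

theorem take_flatten_replicate (u : List α) {d : ℕ} (hd : d ≠ 0) :
    (replicate d u).flatten.take u.length = u := by
  obtain ⟨d, rfl⟩ := Nat.exists_eq_succ_of_ne_zero hd
  simp [replicate_succ]

theorem eq_flatten_replicate_of_append_comm {u v : List α} {d : ℕ}
    (hv : v.length = d * u.length) (h : v ++ u = u ++ v) : v = (replicate d u).flatten := by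
  induction d generalizing v with
  | zero => simpa using hv
  | succ d ih =>
    obtain ⟨v', rfl⟩ : ∃ v', v = u ++ v' := by
      have hpre := congrArg (take u.length) h
      rw [take_append_of_le_length (by rw [hv]; exact Nat.le_mul_of_pos_left _ d.succ_pos),
        take_left' rfl] at hpre
      exact ⟨v.drop u.length, by conv_lhs => rw [← take_append_drop u.length v, hpre]⟩
    have hv' : v'.length = d * u.length := by simp [add_mul] at hv; omega
    rw [replicate_succ, flatten_cons, ← ih hv' (by simpa using h)]

noncomputable def rotationPeriod (w : List α) : ℕ := Function.minimalPeriod (rotate · 1) w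

theorem iterate_rotate_one (w : List α) (k : ℕ) : (rotate · 1)^[k] w = w.rotate k := by
  induction k with
  | zero => simp
  | succ k ih => rw [Function.iterate_succ_apply', ih, rotate_rotate]

theorem rotate_eq_self_iff_rotationPeriod_dvd {w : List α} {k : ℕ} :
    w.rotate k = w ↔ w.rotationPeriod ∣ k := by
  rw [← iterate_rotate_one]
  exact Function.isPeriodicPt_iff_minimalPeriod_dvd

theorem rotate_rotationPeriod (w : List α) : w.rotate w.rotationPeriod = w :=
  rotate_eq_self_iff_rotationPeriod_dvd.2 dvd_rfl

theorem rotationPeriod_dvd_length (w : List α) : w.rotationPeriod ∣ w.length :=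
  rotate_eq_self_iff_rotationPeriod_dvd.1 w.rotate_length

theorem rotationPeriod_pos (w : List α) : 0 < w.rotationPeriod := by
  have key {k : ℕ} (hk : 0 < k) (h : w.rotate k = w) : 0 < w.rotationPeriod :=
    Function.IsPeriodicPt.minimalPeriod_pos hk ((iterate_rotate_one w k).trans h)
  cases w
  · exact key one_pos (rotate_nil 1)
  · exact key (Nat.succ_pos _) (rotate_length _)

theorem flatten_replicate_take_of_rotate_eq_self {w : List α} {p : ℕ} (h : w.rotate p = w)
    (hp : p ∣ w.length) : (replicate (w.length / p) (w.take p)).flatten = w := by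
  obtain ⟨k, hk⟩ := hp
  rcases Nat.eq_zero_or_pos (p * k) with hw | hw
  · simp_all
  have hp0 : 0 < p := Nat.pos_of_mul_pos_right hw
  have hpw : p ≤ w.length := hk ▸ Nat.le_mul_of_pos_right p (Nat.pos_of_mul_pos_left hw)
  obtain ⟨k, rfl⟩ := Nat.exists_eq_succ_of_ne_zero (Nat.pos_of_mul_pos_left hw).ne'
  have hdrop : w.drop p = (replicate k (w.take p)).flatten := by
    refine eq_flatten_replicate_of_append_comm ?_ ?_
    · simp [hk, Nat.mul_succ]; ring
    · rw [← rotate_eq_drop_append_take hpw, h, take_append_drop]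
  rw [hk, Nat.mul_div_cancel_left _ hp0, replicate_succ, flatten_cons, ← hdrop, take_append_drop]

theorem flatten_replicate_take_rotationPeriod (w : List α) :
    (replicate (w.length / w.rotationPeriod) (w.take w.rotationPeriod)).flatten = w :=
  flatten_replicate_take_of_rotate_eq_self w.rotate_rotationPeriod w.rotationPeriod_dvd_length

theorem isPrimitive_take_rotationPeriod (w : List α) : (w.take w.rotationPeriod).IsPrimitive := by
  intro k hk0 hk hrot
  have hw : w.rotate k = w := by
    rw [← flatten_replicate_take_rotationPeriod w, rotate_flatten_replicate hk.le, hrot]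
  have hkp : k < w.rotationPeriod := hk.trans_le (length_take_le _ _)
  exact hkp.not_ge (Nat.le_of_dvd hk0 (rotate_eq_self_iff_rotationPeriod_dvd.1 hw))

theorem exists_isPrimitive_flatten_replicate_eq {w : List α} (hw : w ≠ []) :
    ∃ u d, u.IsPrimitive ∧ d ≠ 0 ∧ (replicate d u).flatten = w := by
  refine ⟨_, _, isPrimitive_take_rotationPeriod w, ?_, flatten_replicate_take_rotationPeriod w⟩
  exact (Nat.div_pos (Nat.le_of_dvd (length_pos_iff.2 hw) w.rotationPeriod_dvd_length)
    w.rotationPeriod_pos).ne'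

theorem IsPrimitive.rotate {u : List α} (hu : u.IsPrimitive) (r : ℕ) :
    (u.rotate r).IsPrimitive := by
  intro k hk0 hk hrot
  rw [rotate_rotate, add_comm, ← rotate_rotate, rotate_eq_rotate] at hrot
  exact hu k hk0 (by simpa using hk) hrot

theorem IsPrimitive.rotate_injOn {u : List α} (hu : u.IsPrimitive) :
    Set.InjOn u.rotate (Set.Iio u.length) := by
  intro r hr r' hr' h
  wlog hle : r ≤ r' generalizing r r'
  · exact (this hr' hr h.symm (le_of_not_ge hle)).symm
  by_contra hne
  refine hu (r' - r) (by omega) (by simp at hr'; omega) ?_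
  rw [← rotate_eq_rotate (n := r), rotate_rotate, Nat.sub_add_cancel hle]
  exact h.symm

theorem IsPrimitive.rotationPeriod_flatten_replicate {u : List α} (hu : u.IsPrimitive)
    (hu0 : u ≠ []) {d : ℕ} (hd : d ≠ 0) :
    (replicate d u).flatten.rotationPeriod = u.length := by
  set q := (replicate d u).flatten.rotationPeriod
  have hq : q ≤ u.length := by
    refine Nat.le_of_dvd (length_pos_iff.2 hu0) (rotate_eq_self_iff_rotationPeriod_dvd.1 ?_)
    rw [rotate_flatten_replicate le_rfl, rotate_length]
  have hrot : u.rotate q = u := by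
    have h := congrArg (take u.length) (rotate_flatten_replicate hq d)
    rw [rotate_rotationPeriod, take_flatten_replicate u hd, ← length_rotate u q,
      take_flatten_replicate _ hd] at h
    exact h.symm
  by_contra hne
  exact hu q (rotationPeriod_pos _) (lt_of_le_of_ne hq hne) hrot

theorem IsPrimitive.flatten_replicate_inj {u v : List α} {d e : ℕ} (hu : u.IsPrimitive)
    (hv : v.IsPrimitive) (hu0 : u ≠ []) (hv0 : v ≠ []) (hd : d ≠ 0) (he : e ≠ 0)
    (h : (replicate d u).flatten = (replicate e v).flatten) : u = v ∧ d = e := by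
  have hlen : u.length = v.length := by
    rw [← hu.rotationPeriod_flatten_replicate hu0 hd, h, hv.rotationPeriod_flatten_replicate hv0 he]
  obtain rfl : u = v := by
    rw [← take_flatten_replicate u hd, h, hlen, take_flatten_replicate v he]
  refine ⟨rfl, Nat.eq_of_mul_eq_mul_right (length_pos_iff.2 hu0) ?_⟩
  simpa using congrArg length h

end List

theorem IsLyndon.isPrimitive {ℓ : List ℕ} (h : IsLyndon ℓ) : ℓ.IsPrimitive := by
  intro k hk0 hk hrot
  have hlt : ℓ < ℓ.rotate k := h k hk0 hk
  exact hlt.ne hrot.symm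

theorem IsLyndon.eq_of_isRotated {ℓ ℓ' : List ℕ} (h : IsLyndon ℓ) (h' : IsLyndon ℓ')
    (hr : ℓ ~r ℓ') : ℓ = ℓ' := by
  obtain ⟨k, hk, rfl⟩ := List.isRotated_iff_mod.1 hr
  rcases Nat.eq_zero_or_pos k with rfl | hk0
  · exact (List.rotate_zero ℓ).symm
  rcases hk.lt_or_eq with hk | rfl
  · have h₁ : ℓ < ℓ.rotate k := h k hk0 hk
    have h₂ : ℓ.rotate k < ℓ := by
      have := h' (ℓ.length - k) (by omega) (by simp; omega)
      rwa [List.rotate_rotate, Nat.add_sub_cancel' hk.le, List.rotate_length] at this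
    exact absurd h₁ (lt_asymm h₂)
  · exact (List.rotate_length ℓ).symm

theorem List.IsPrimitive.exists_isLyndon_isRotated {u : List ℕ} (hu : u.IsPrimitive)
    (hu0 : u ≠ []) : ∃ ℓ, IsLyndon ℓ ∧ ℓ ~r u := by
  have hlen := List.length_pos_iff.2 hu0
  obtain ⟨s, -, hs⟩ := (Finset.range u.length).exists_min_image u.rotate
    ⟨0, Finset.mem_range.2 hlen⟩
  have hmin (k : ℕ) : u.rotate s ≤ u.rotate k := by
    rw [← List.rotate_mod u k]
    exact hs _ (Finset.mem_range.2 (Nat.mod_lt _ hlen))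
  refine ⟨u.rotate s, fun k hk0 hk => ?_, List.IsRotated.forall u s⟩
  refine lt_of_le_of_ne ?_ fun heq => hu.rotate s k hk0 hk heq.symm
  rw [List.rotate_rotate]
  exact hmin _

theorem card_isPrimitive_eq_mul_card_isLyndon {p : ℕ} (hp : 0 < p) (ν : ℕ → ℕ) :
    Nat.card {u : List ℕ // u.length = p ∧ (∀ j, u.count j = ν j) ∧ u.IsPrimitive} =
      p * Nat.card {ℓ : List ℕ // ℓ.length = p ∧ (∀ j, ℓ.count j = ν j) ∧ IsLyndon ℓ} := by
  let f : Fin p × {ℓ : List ℕ // ℓ.length = p ∧ (∀ j, ℓ.count j = ν j) ∧ IsLyndon ℓ} →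
      {u : List ℕ // u.length = p ∧ (∀ j, u.count j = ν j) ∧ u.IsPrimitive} :=
    fun ⟨r, ℓ, hlen, hcount, hℓ⟩ => ⟨ℓ.rotate r, by simpa using hlen,
      fun j => ((ℓ.rotate_perm r).count_eq j).trans (hcount j), hℓ.isPrimitive.rotate r⟩
  have hf : Function.Bijective f := by
    constructor
    · rintro ⟨r, ℓ, hlen, _, hℓ⟩ ⟨r', ℓ', hlen', _, hℓ'⟩ h
      have hrot : ℓ.rotate r = ℓ'.rotate r' := congrArg Subtype.val h
      obtain rfl : ℓ = ℓ' := hℓ.eq_of_isRotated hℓ'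
        ((List.IsRotated.forall ℓ r).symm.trans (hrot ▸ List.IsRotated.forall ℓ' r'))
      obtain rfl : r = r' := Fin.ext <| hℓ.isPrimitive.rotate_injOn
        (by simp [hlen]) (by simp [hlen]) hrot
      rfl
    · rintro ⟨u, hlen, hcount, hu⟩
      obtain ⟨ℓ, hℓ, r, rfl⟩ :=
        hu.exists_isLyndon_isRotated (List.ne_nil_of_length_pos (hlen ▸ hp))
      have hℓlen : ℓ.length = p := by simpa using hlen
      refine ⟨(⟨r % p, Nat.mod_lt _ hp⟩, ⟨ℓ, hℓlen,
        fun j => ((ℓ.rotate_perm r).count_eq j).symm.trans (hcount j), hℓ⟩), ?_⟩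
      exact Subtype.ext (by simp [f, ← hℓlen, List.rotate_mod])
  rw [← Nat.card_congr (Equiv.ofBijective f hf), Nat.card_prod, Nat.card_eq_fintype_card,
    Fintype.card_fin]

theorem List.finite_setOf_count_eq {α : Type*} [DecidableEq α] (ν : α → ℕ) :
    {w : List α | ∀ a, w.count a = ν a}.Finite := by
  by_cases h : ∃ w₀ : List α, ∀ a, w₀.count a = ν a
  · obtain ⟨w₀, hw₀⟩ := h
    refine w₀.permutations.toFinset.finite_toSet.subset fun w hw => ?_
    simpa [List.mem_permutations, List.perm_iff_count, hw₀] using hw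
  · exact Set.finite_empty.subset fun w hw => h ⟨w, hw⟩

theorem Finsupp.dvd_gcd_support_iff {α : Type*} (μ : α →₀ ℕ) {d : ℕ} :
    d ∣ μ.support.gcd μ ↔ ∀ a, d ∣ μ a := by
  rw [Finset.dvd_gcd_iff]
  refine ⟨fun h a => ?_, fun h a _ => h a⟩
  by_cases ha : a ∈ μ.support
  · exact h a ha
  · rw [Finsupp.notMem_support_iff.1 ha]
    exact dvd_zero d

theorem Finsupp.gcd_support_eq_zero_iff {α : Type*} (μ : α →₀ ℕ) :
    μ.support.gcd μ = 0 ↔ μ = 0 := by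
  simp [Finset.gcd_eq_zero_iff, Finsupp.ext_iff]

theorem Finsupp.dvd_sum_of_dvd_gcd_support {α : Type*} (μ : α →₀ ℕ) {d : ℕ}
    (hd : d ∣ μ.support.gcd μ) : d ∣ μ.sum fun _ v => v :=
  Finset.dvd_sum fun a _ => μ.dvd_gcd_support_iff.1 hd a

theorem card_words_eq_sum_card_isPrimitive {α : Type*} [DecidableEq α] {n : ℕ} (hn : 0 < n)
    (μ : α →₀ ℕ) (hsum : (μ.sum fun _ v => v) = n) :
    Nat.card {w : List α // w.length = n ∧ ∀ a, w.count a = μ a} =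
      ∑ d ∈ (μ.support.gcd μ).divisors,
        Nat.card {u : List α // u.length = n / d ∧ (∀ a, u.count a = μ a / d) ∧ u.IsPrimitive} := by
  set m := μ.support.gcd μ
  have hm0 : m ≠ 0 := fun hm => hn.ne' <| by simp [← hsum, μ.gcd_support_eq_zero_iff.1 hm]
  have hdvd {d : ℕ} (hd : d ∈ m.divisors) : d ∣ n ∧ ∀ a, d ∣ μ a :=
    ⟨hsum ▸ μ.dvd_sum_of_dvd_gcd_support (Nat.dvd_of_mem_divisors hd),
      μ.dvd_gcd_support_iff.1 (Nat.dvd_of_mem_divisors hd)⟩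
  let f : (Σ d : m.divisors,
      {u : List α // u.length = n / d ∧ (∀ a, u.count a = μ a / d) ∧ u.IsPrimitive}) →
      {w : List α // w.length = n ∧ ∀ a, w.count a = μ a} :=
    fun ⟨⟨d, hd⟩, u, hlen, hcount, _⟩ => ⟨(List.replicate d u).flatten,
      by simp [hlen, Nat.mul_div_cancel' (hdvd hd).1],
      fun a => by rw [List.count_flatten_replicate, hcount, Nat.mul_div_cancel' ((hdvd hd).2 a)]⟩
  have hf : Function.Bijective f := by
    constructor
    · rintro ⟨⟨d, hd⟩, u, hlen, _, hu⟩ ⟨⟨d', hd'⟩, u', hlen', _, hu'⟩ h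
      have hne {d : ℕ} (hd : d ∈ m.divisors) {u : List α} (hlen : u.length = n / d) : u ≠ [] :=
        List.ne_nil_of_length_pos <| hlen ▸
          Nat.div_pos (Nat.le_of_dvd hn (hdvd hd).1) (Nat.pos_of_mem_divisors hd)
      obtain ⟨rfl, rfl⟩ := hu.flatten_replicate_inj hu' (hne hd hlen) (hne hd' hlen')
        (Nat.pos_of_mem_divisors hd).ne' (Nat.pos_of_mem_divisors hd').ne' (congrArg Subtype.val h)
      rfl
    · rintro ⟨w, hlen, hcount⟩
      obtain ⟨u, d, hu, hd, rfl⟩ :=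
        List.exists_isPrimitive_flatten_replicate_eq (List.ne_nil_of_length_pos (hlen ▸ hn))
      simp only [List.length_flatten_replicate, List.count_flatten_replicate] at hlen hcount
      have hd0 : 0 < d := Nat.pos_of_ne_zero hd
      have hdm : d ∈ m.divisors :=
        Nat.mem_divisors.2 ⟨μ.dvd_gcd_support_iff.2 fun a => hcount a ▸ dvd_mul_right d _, hm0⟩
      refine ⟨⟨⟨d, hdm⟩, u, ?_, fun a => ?_, hu⟩, rfl⟩
      · rw [← hlen, Nat.mul_div_cancel_left _ hd0]
      · rw [← hcount a, Nat.mul_div_cancel_left _ hd0]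
  have (d : m.divisors) :
      Finite {u : List α // u.length = n / d ∧ (∀ a, u.count a = μ a / d) ∧ u.IsPrimitive} :=
    ((List.finite_setOf_count_eq _).subset fun u hu => hu.2.1).to_subtype
  rw [← Nat.card_congr (Equiv.ofBijective f hf), Nat.card_sigma]
  exact Finset.sum_coe_sort m.divisors fun d =>
    Nat.card {u : List α // u.length = n / d ∧ (∀ a, u.count a = μ a / d) ∧ u.IsPrimitive}

/-- Let `a_{n,μ}` be the number of Lyndon words of length `n` with evaluation `μ`.
Then the number of length-`n` words with evaluation `μ` equals
`Σ_{d ∣ m} (n/d) · a_{n/d, μ/d}` where `m = gcd(μ₁, μ₂, …)`. -/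
theorem count_words_eq_sum_lyndon (n : ℕ) (hn : 0 < n) (μ : ℕ →₀ ℕ)
    (hsum : (μ.sum fun _ v => v) = n) :
    Nat.card {w : List ℕ // w.length = n ∧ ∀ j, w.count j = μ j} =
      ∑ d ∈ (μ.support.gcd μ).divisors,
        (n / d) *
          Nat.card {w : List ℕ // w.length = n / d ∧ (∀ j, w.count j = μ j / d) ∧ IsLyndon w} := by
  rw [card_words_eq_sum_card_isPrimitive hn μ hsum]
  refine Finset.sum_congr rfl fun d hd => card_isPrimitive_eq_mul_card_isLyndon ?_ _
  have hdn : d ∣ n := hsum ▸ μ.dvd_sum_of_dvd_gcd_support (Nat.dvd_of_mem_divisors hd)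
  exact Nat.div_pos (Nat.le_of_dvd hn hdn) (Nat.pos_of_mem_divisors hd)
end

section
/- For 1 ≤ i ≤ (n-1)/2, β_n({2, 4, …, 2i-2}) + β_n({2, 4, …, 2i}) = C(n, 2i) · E_{2i}, where E_{2i} is the number of alternating (up–down) permutations of [2i]. -/
open Finset

/-- The value `π(i)` of a permutation of `[n]`, in 1-based position notation. -/
def permVal {n : ℕ} (π : Equiv.Perm (Fin n)) (i : ℕ) : ℕ :=
  if h : i - 1 < n then ((π ⟨i - 1, h⟩ : Fin n) : ℕ) else 0

/-- The descent set `D(π) = {i ∈ [n-1] : π(i) > π(i+1)}` (1-based). -/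
def descSet {n : ℕ} (π : Equiv.Perm (Fin n)) : Finset ℕ :=
  (Finset.Ioo 0 n).filter fun i => permVal π (i + 1) < permVal π i

/-- `π` is an `n`-cycle: a permutation of `[n]` consisting of a single cycle of length `n`. -/
def IsFullCycle {n : ℕ} (π : Equiv.Perm (Fin n)) : Prop :=
  ∀ x y : Fin n, ∃ k : ℕ, (π ^ k) x = y

/-- `α_n(I)`: number of permutations of `[n]` with descent set contained in `I`. -/
noncomputable def alphaP (n : ℕ) (I : Finset ℕ) : ℕ :=
  Nat.card {π : Equiv.Perm (Fin n) // descSet π ⊆ I}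

/-- `α^cyc_n(I)`: number of `n`-cycles with descent set contained in `I`. -/
noncomputable def alphaC (n : ℕ) (I : Finset ℕ) : ℕ :=
  Nat.card {π : Equiv.Perm (Fin n) // IsFullCycle π ∧ descSet π ⊆ I}

/-- `β_n(I)`: number of permutations of `[n]` with descent set exactly `I`. -/
noncomputable def betaP (n : ℕ) (I : Finset ℕ) : ℕ :=
  Nat.card {π : Equiv.Perm (Fin n) // descSet π = I}

/-- `β^cyc_n(I)`: number of `n`-cycles with descent set exactly `I`. -/
noncomputable def betaC (n : ℕ) (I : Finset ℕ) : ℕ :=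
  Nat.card {π : Equiv.Perm (Fin n) // IsFullCycle π ∧ descSet π = I}

/-- `I/d = {i/d : i ∈ I, d ∣ i}`. -/
def divSet (I : Finset ℕ) (d : ℕ) : Finset ℕ :=
  (I.filter fun i => d ∣ i).image (· / d)

/-- The set `{2, 4, …, 2i}`. -/
def evensTo (i : ℕ) : Finset ℕ := (Finset.Icc 1 i).image fun j => 2 * j

/-!
A permutation of `[m + k]` without descents after position `m` is determined by the set `S`
of its first `m` values and their relative order `σ ∈ 𝔖_m`: its last `k` values are the
elements of `Sᶜ` in increasing order. Its descents before `m` are those of `σ`, while `m`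
itself may or may not be a descent. So for `J ⊆ [m - 1]` the permutations with descent set
`J` or `J ∪ {m}` number `C(m + k, m) · β_m(J)`; the theorem is the case `m = 2i`,
`J = {2, 4, …, 2i - 2}`.
-/

open Equiv

theorem Finset.erase_eq_iff_eq_or_eq_insert {α : Type*} [DecidableEq α] {s t : Finset α}
    {a : α} (ht : a ∉ t) : s.erase a = t ↔ s = t ∨ s = insert a t := by
  by_cases hs : a ∈ s
  · rw [erase_eq_iff_eq_insert hs ht, or_iff_right (by rintro rfl; exact ht hs)]
  · rw [erase_eq_of_notMem hs, or_iff_left (by rintro rfl; exact hs (mem_insert_self a t))]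

theorem card_compl_eq_of_card_eq {m k : ℕ} {S : Finset (Fin (m + k))} (hS : S.card = m) :
    Sᶜ.card = k := by
  rw [card_compl, hS, Fintype.card_fin, Nat.add_sub_cancel_left]

theorem descSet_subset_Ioo {n : ℕ} (π : Perm (Fin n)) : descSet π ⊆ Ioo 0 n :=
  filter_subset _ _

theorem succ_mem_descSet_iff {n j : ℕ} (π : Perm (Fin n)) (hj : j + 1 < n) :
    j + 1 ∈ descSet π ↔ π ⟨j + 1, hj⟩ < π ⟨j, by omega⟩ := by
  simp [descSet, permVal, hj, show j < n by omega]

theorem descSet_subset_Iic_iff {m k : ℕ} (π : Perm (Fin (m + k))) :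
    descSet π ⊆ Iic m ↔ StrictMono fun t : Fin k => π (Fin.natAdd m t) := by
  cases k with
  | zero =>
    refine iff_of_true (fun j hj => ?_) fun t => t.elim0
    have := mem_Ioo.mp (descSet_subset_Ioo π hj)
    exact mem_Iic.2 (by omega)
  | succ k =>
    rw [Fin.strictMono_iff_lt_succ]
    constructor
    · intro h i
      have hdesc : m + i + 1 ∉ descSet π := fun hi => by simpa using h hi
      rw [succ_mem_descSet_iff π (by omega), not_lt] at hdesc
      refine hdesc.lt_of_ne fun heq => ?_
      simpa [Fin.ext_iff] using π.injective heq
    · intro h j hj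
      by_contra hjm
      obtain ⟨i, rfl⟩ : ∃ i, j = m + i + 1 := ⟨j - m - 1, by rw [mem_Iic] at hjm; omega⟩
      have hlt := mem_Ioo.mp (descSet_subset_Ioo π hj)
      rw [succ_mem_descSet_iff π hlt.2] at hj
      exact (h ⟨i, by omega⟩).not_gt hj

theorem mem_descSet_iff_of_apply_castAdd {m k j : ℕ} {π : Perm (Fin (m + k))}
    {σ : Perm (Fin m)} {f : Fin m → Fin (m + k)} (hf : StrictMono f)
    (hπ : ∀ i, π (Fin.castAdd k i) = f (σ i)) (hj : j < m) :
    j ∈ descSet π ↔ j ∈ descSet σ := by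
  cases j with
  | zero => simp [descSet]
  | succ j =>
    rw [succ_mem_descSet_iff π (by omega), succ_mem_descSet_iff σ hj, ← hf.lt_iff_lt]
    exact iff_of_eq (congrArg₂ _ (hπ ⟨j + 1, hj⟩) (hπ ⟨j, by omega⟩))

section MergePerm

variable {m k : ℕ} (S : {S : Finset (Fin (m + k)) // S.card = m})

noncomputable def enumSumCompl : Fin m ⊕ Fin k ≃ Fin (m + k) :=
  Equiv.ofBijective
    (Sum.elim (S.1.orderEmbOfFin S.2) (S.1ᶜ.orderEmbOfFin (card_compl_eq_of_card_eq S.2))) <|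
    (Fintype.bijective_iff_injective_and_card _).2
      ⟨(RelEmbedding.injective _).sumElim (RelEmbedding.injective _) fun a b h =>
        (mem_compl.1 (h ▸ orderEmbOfFin_mem _ _ b)) (orderEmbOfFin_mem _ _ a), by simp⟩

/-- Lists `S` in the relative order `σ`, followed by `Sᶜ` in increasing order. -/
noncomputable def mergePerm (σ : Perm (Fin m)) : Perm (Fin (m + k)) :=
  finSumFinEquiv.symm.trans ((σ.sumCongr (Equiv.refl _)).trans (enumSumCompl S))

variable (σ : Perm (Fin m))

@[simp]
theorem mergePerm_castAdd (i : Fin m) :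
    mergePerm S σ (Fin.castAdd k i) = S.1.orderEmbOfFin S.2 (σ i) := by
  simp [mergePerm, enumSumCompl]

@[simp]
theorem mergePerm_natAdd (t : Fin k) :
    mergePerm S σ (Fin.natAdd m t) = S.1ᶜ.orderEmbOfFin (card_compl_eq_of_card_eq S.2) t := by
  simp [mergePerm, enumSumCompl]

theorem descSet_mergePerm_subset : descSet (mergePerm S σ) ⊆ Iic m := by
  rw [descSet_subset_Iic_iff]
  simpa using (S.1ᶜ.orderEmbOfFin (card_compl_eq_of_card_eq S.2)).strictMono

theorem erase_descSet_mergePerm : (descSet (mergePerm S σ)).erase m = descSet σ := by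
  ext j
  rcases lt_or_ge j m with hj | hj
  · rw [mem_erase, mem_descSet_iff_of_apply_castAdd (S.1.orderEmbOfFin S.2).strictMono
      (mergePerm_castAdd S σ) hj, and_iff_right hj.ne]
  · have hσ : j ∉ descSet σ := fun h => by simpa [hj.not_gt] using descSet_subset_Ioo σ h
    have hπ : j ∉ (descSet (mergePerm S σ)).erase m := fun h =>
      ne_of_mem_erase h <|
        (mem_Iic.1 (descSet_mergePerm_subset S σ (mem_of_mem_erase h))).antisymm hj
    simp [hσ, hπ]

theorem image_mergePerm_castAdd :
    univ.image (fun i => mergePerm S σ (Fin.castAdd k i)) = S.1 := by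
  simp only [mergePerm_castAdd]
  conv_rhs => rw [← image_orderEmbOfFin_univ S.1 S.2, ← image_univ_equiv σ, image_image]
  rfl

theorem mergePerm_injective :
    Function.Injective fun p : Perm (Fin m) × {S : Finset (Fin (m + k)) // S.card = m} =>
      mergePerm p.2 p.1 := by
  rintro ⟨σ, S⟩ ⟨σ', S'⟩ h
  obtain rfl : S = S' := Subtype.ext <| by
    rw [← image_mergePerm_castAdd S σ, ← image_mergePerm_castAdd S' σ']
    simp only at h
    rw [h]
  refine Prod.ext (Equiv.ext fun i => ?_) rfl
  have := DFunLike.congr_fun h (Fin.castAdd k i)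
  simp only [mergePerm_castAdd] at this
  rw [(S.1.orderEmbOfFin S.2).injective this]

theorem exists_mergePerm_eq (π : Perm (Fin (m + k))) (hπ : descSet π ⊆ Iic m) :
    ∃ (σ : Perm (Fin m)) (S : {S : Finset (Fin (m + k)) // S.card = m}),
      mergePerm S σ = π := by
  set S : Finset (Fin (m + k)) := univ.image fun i => π (Fin.castAdd k i)
  have hS : S.card = m := by
    rw [card_image_of_injective _ fun a b h => Fin.castAdd_injective m k (π.injective h),
      card_fin]
  have hmem i : π (Fin.castAdd k i) ∈ S := mem_image_of_mem _ (mem_univ i)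
  let g i := (S.orderIsoOfFin hS).symm ⟨_, hmem i⟩
  have hg : Function.Injective g := fun a b hab => by
    simpa using (S.orderIsoOfFin hS).symm.injective hab
  let σ := Equiv.ofBijective g (Finite.injective_iff_bijective.mp hg)
  have hσ i : S.orderEmbOfFin hS (σ i) = π (Fin.castAdd k i) := by
    simp [σ, g, ← coe_orderIsoOfFin_apply]
  refine ⟨σ, ⟨S, hS⟩, Equiv.ext fun j => Fin.addCases (fun i => ?_) (fun t => ?_) j⟩
  · simpa using hσ i
  · have htail : StrictMono fun t : Fin k => π (Fin.natAdd m t) :=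
      (descSet_subset_Iic_iff π).1 hπ
    have hcompl t : π (Fin.natAdd m t) ∈ Sᶜ := by
      simp only [S, mem_compl, mem_image, mem_univ, true_and, EmbeddingLike.apply_eq_iff_eq,
        Fin.ext_iff, Fin.val_castAdd, Fin.val_natAdd, not_exists]
      omega
    rw [mergePerm_natAdd]
    exact (congrFun (orderEmbOfFin_unique (card_compl_eq_of_card_eq hS) hcompl htail) t).symm

end MergePerm

noncomputable def mergePermEquiv {m k : ℕ} :
    Perm (Fin m) × {S : Finset (Fin (m + k)) // S.card = m} ≃
      {π : Perm (Fin (m + k)) // descSet π ⊆ Iic m} :=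
  Equiv.ofBijective (fun p => ⟨mergePerm p.2 p.1, descSet_mergePerm_subset p.2 p.1⟩)
    ⟨fun _ _ h => mergePerm_injective (congrArg Subtype.val h), fun ⟨π, hπ⟩ =>
      let ⟨σ, S, h⟩ := exists_mergePerm_eq π hπ
      ⟨(σ, S), Subtype.ext h⟩⟩

theorem card_erase_descSet_eq {m k : ℕ} {J : Finset ℕ} (hJ : ∀ j ∈ J, j < m) :
    Nat.card {π : Perm (Fin (m + k)) // (descSet π).erase m = J} =
      (m + k).choose m * betaP m J := by
  have hsub {π : Perm (Fin (m + k))} (h : (descSet π).erase m = J) : descSet π ⊆ Iic m :=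
    fun j hj => mem_Iic.2 <| by
      rcases eq_or_ne j m with rfl | hjm
      · rfl
      · exact (hJ j (h ▸ mem_erase_of_ne_of_mem hjm hj)).le
  calc Nat.card {π : Perm (Fin (m + k)) // (descSet π).erase m = J}
      = Nat.card {π : {π : Perm (Fin (m + k)) // descSet π ⊆ Iic m} //
          (descSet π.1).erase m = J} :=
        Nat.card_congr (Equiv.subtypeSubtypeEquivSubtype hsub).symm
    _ = Nat.card {p : Perm (Fin m) × {S : Finset (Fin (m + k)) // S.card = m} //
          descSet p.1 = J} :=
        Nat.card_congr (mergePermEquiv.subtypeEquiv fun p => by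
          rw [← erase_descSet_mergePerm p.2 p.1]; rfl).symm
    _ = (m + k).choose m * betaP m J := by
        rw [Nat.card_congr (Equiv.prodSubtypeFstEquivSubtypeProd
            (p := fun σ : Perm (Fin m) => descSet σ = J)), Nat.card_prod, mul_comm,
          Nat.card_eq_fintype_card (α := {S : Finset _ // _}), Fintype.card_finset_len,
          Fintype.card_fin, betaP]

theorem betaP_add_betaP_insert {m k : ℕ} {J : Finset ℕ} (hJ : ∀ j ∈ J, j < m) :
    betaP (m + k) J + betaP (m + k) (insert m J) = (m + k).choose m * betaP m J := by
  have hmJ : m ∉ J := fun h => (hJ m h).false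
  rw [← card_erase_descSet_eq hJ, betaP, betaP, Nat.card_eq_fintype_card,
    Nat.card_eq_fintype_card, ← Fintype.card_subtype_or_disjoint, Nat.card_eq_fintype_card]
  · exact Fintype.card_congr (Equiv.subtypeEquivRight fun π =>
      (Finset.erase_eq_iff_eq_or_eq_insert hmJ).symm)
  · rintro p hJ' hins π hp
    exact hmJ ((hJ' π hp) ▸ (hins π hp) ▸ mem_insert_self m J)

theorem le_of_mem_evensTo {i j : ℕ} (h : j ∈ evensTo i) : j ≤ 2 * i := by
  obtain ⟨l, hl, rfl⟩ := mem_image.1 h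
  have := (mem_Icc.1 hl).2
  omega

theorem evensTo_eq_insert {i : ℕ} (hi : 1 ≤ i) :
    evensTo i = insert (2 * i) (evensTo (i - 1)) := by
  rw [evensTo, evensTo, ← image_insert, insert_Icc_sub_one_right_eq_Icc hi]

/-- For `1 ≤ i ≤ (n-1)/2`,
`β_n({2, 4, …, 2i-2}) + β_n({2, 4, …, 2i}) = C(n, 2i) · E_{2i}`,
where `E_{2i} = β_{2i}({2, 4, …, 2i-2})` counts alternating permutations of `[2i]`. -/
theorem betaP_evens_add (n i : ℕ) (hi : 1 ≤ i) (hin : 2 * i < n) :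
    betaP n (evensTo (i - 1)) + betaP n (evensTo i) =
      n.choose (2 * i) * betaP (2 * i) (evensTo (i - 1)) := by
  obtain ⟨k, rfl⟩ := Nat.exists_eq_add_of_le hin.le
  rw [evensTo_eq_insert hi]
  exact betaP_add_betaP_insert fun j hj => by have := le_of_mem_evensTo hj; omega
end

section
/- If 2k ≤ n/2, then β_n({2, 4, …, 2k}) ≥ (1/2) · C(n, 2k) · E_{2k}, where β_n(I) is the number of permutations of [n] with descent set exactly I and E_{2k} is the number of alternating permutations of [2k]. -/
open Finset

/-!
Write the elements of an `m`-subset `A ⊆ [n]` in the relative order of `σ ∈ S_m`, followed by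
those of `Aᶜ` in increasing order. The descent set of the resulting permutation is `D(σ)`, plus
`m` when there is a descent at `m`. When there is none and `m - 1 ∉ D(σ)`, `n ≥ m + 2`, the
positions `m - 1, …, m + 2` form an increasing run, so swapping the entries at `m` and `m + 1`
creates the descent at `m` and changes nothing else. Both maps `(A, σ) ↦ π` are injective, hence
`C(n, m) β_m(I) ≤ 2 β_n(I ∪ {m})`; for `m = 2k` and `I = {2, …, 2k - 2}` this is the claim.
-/

open Equiv

section Descents

variable {n : ℕ} {π : Perm (Fin n)}

lemma bounds_of_mem_descSet {i : ℕ} (h : i ∈ descSet π) : 0 < i ∧ i < n :=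
  mem_Ioo.1 (filter_subset _ _ h)

lemma notMem_descSet_of_le {i : ℕ} (h : n ≤ i) : i ∉ descSet π :=
  fun hi => by have := bounds_of_mem_descSet hi; omega

lemma mem_descSet_iff_lt {i : ℕ} (h0 : 0 < i) (hi : i < n) :
    i ∈ descSet π ↔ π ⟨i, hi⟩ < π ⟨i - 1, by omega⟩ := by
  simp [descSet, permVal, h0, hi, show i - 1 < n by omega]

lemma lt_of_notMem_descSet {i : ℕ} (h0 : 0 < i) (hi : i < n) (h : i ∉ descSet π) :
    π ⟨i - 1, by omega⟩ < π ⟨i, hi⟩ := by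
  rw [mem_descSet_iff_lt h0 hi, not_lt] at h
  exact h.lt_of_ne (π.injective.ne (by rw [Ne, Fin.mk.injEq]; omega))

lemma descSet_one : descSet (1 : Perm (Fin n)) = ∅ :=
  eq_empty_of_forall_notMem fun i hi => by
    obtain ⟨h0, hi'⟩ := bounds_of_mem_descSet hi
    rw [mem_descSet_iff_lt h0 hi', Perm.one_apply, Perm.one_apply, Fin.mk_lt_mk] at hi
    omega

lemma descSet_mul_swap {j : ℕ} (hj : j + 2 < n) (h₀ : j ∉ descSet π)
    (h₁ : j + 1 ∉ descSet π) (h₂ : j + 2 ∉ descSet π) :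
    descSet (π * swap ⟨j, by omega⟩ ⟨j + 1, by omega⟩) = insert (j + 1) (descSet π) := by
  have lt₁ := lt_of_notMem_descSet (by omega) (by omega) h₁
  have lt₂ := lt_of_notMem_descSet (by omega) hj h₂
  simp only [Nat.add_sub_cancel, Nat.add_succ_sub_one] at lt₁ lt₂
  ext i
  rw [mem_insert]
  by_cases hi : 0 < i ∧ i < n
  swap
  · exact iff_of_false (fun h => hi (bounds_of_mem_descSet h))
      (by rintro (rfl | h) <;> [omega; exact hi (bounds_of_mem_descSet h)])
  obtain ⟨h0, hi⟩ := hi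
  rw [mem_descSet_iff_lt h0 hi, mem_descSet_iff_lt h0 hi, Perm.mul_apply, Perm.mul_apply]
  obtain hlt | rfl | rfl | rfl | hgt : i < j ∨ i = j ∨ i = j + 1 ∨ i = j + 2 ∨ j + 2 < i := by
    omega
  · rw [swap_apply_of_ne_of_ne, swap_apply_of_ne_of_ne, or_iff_right (by omega)] <;>
      rw [Ne, Fin.mk.injEq] <;> omega
  · have lt₀ := lt_of_notMem_descSet h0 hi h₀
    rw [swap_apply_left, swap_apply_of_ne_of_ne (by rw [Ne, Fin.mk.injEq]; omega)
      (by rw [Ne, Fin.mk.injEq]; omega)]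
    exact iff_of_false (lt₀.trans lt₁).asymm (by rintro (h | h) <;> [omega; exact lt₀.asymm h])
  · simp only [Nat.add_sub_cancel, swap_apply_left, swap_apply_right, true_or, iff_true]
    exact lt₁
  · simp only [Nat.add_succ_sub_one, swap_apply_right]
    rw [swap_apply_of_ne_of_ne (by rw [Ne, Fin.mk.injEq]; omega)
      (by rw [Ne, Fin.mk.injEq]; omega)]
    exact iff_of_false (lt₁.trans lt₂).asymm (by rintro (h | h) <;> [omega; exact lt₂.asymm h])
  · rw [swap_apply_of_ne_of_ne, swap_apply_of_ne_of_ne, or_iff_right (by omega)] <;>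
      rw [Ne, Fin.mk.injEq] <;> omega

end Descents

lemma Finset.card_compl_fin_add {m r : ℕ} {A : Finset (Fin (m + r))} (hA : #A = m) :
    #Aᶜ = r := by
  simp [card_compl, hA]

section PrefixPerm

variable {m r : ℕ} (A : Finset (Fin (m + r))) (hA : #A = m) (σ : Perm (Fin m))

def prefixPerm : Perm (Fin (m + r)) :=
  finSumFinEquiv.symm.trans <|
    (sumCongr (σ.trans (A.orderIsoOfFin hA).toEquiv)
      ((Aᶜ.orderIsoOfFin (card_compl_fin_add hA)).toEquiv.trans
        (subtypeEquivRight fun _ => mem_compl))).trans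
    (sumCompl (· ∈ A))

@[simp]
lemma prefixPerm_castAdd (i : Fin m) :
    prefixPerm A hA σ (Fin.castAdd r i) = A.orderEmbOfFin hA (σ i) := by
  simp [prefixPerm]

@[simp]
lemma prefixPerm_natAdd (i : Fin r) :
    prefixPerm A hA σ (Fin.natAdd m i) = Aᶜ.orderEmbOfFin (card_compl_fin_add hA) i := by
  simp [prefixPerm]

lemma range_prefixPerm_comp_castAdd :
    Set.range (prefixPerm A hA σ ∘ Fin.castAdd r) = A := by
  rw [show prefixPerm A hA σ ∘ Fin.castAdd r = A.orderEmbOfFin hA ∘ σ by ext; simp,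
    σ.surjective.range_comp, range_orderEmbOfFin]

end PrefixPerm

section PrefixPermProperties

variable {m r : ℕ} {A : Finset (Fin (m + r))} {hA : #A = m} {σ : Perm (Fin m)}

lemma prefixPerm_inj {A' : Finset (Fin (m + r))} {hA' : #A' = m} {σ' : Perm (Fin m)} :
    prefixPerm A hA σ = prefixPerm A' hA' σ' ↔ A = A' ∧ σ = σ' := by
  refine ⟨fun h => ?_, by rintro ⟨rfl, rfl⟩; rfl⟩
  obtain rfl : A = A' := by
    exact_mod_cast (range_prefixPerm_comp_castAdd A hA σ).symm.trans
      (h ▸ range_prefixPerm_comp_castAdd A' hA' σ')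
  refine ⟨rfl, Equiv.ext fun i => (A.orderEmbOfFin hA).injective ?_⟩
  simpa using congr(($h) (Fin.castAdd r i))

lemma mem_descSet_prefixPerm_of_ne {i : ℕ} (him : i ≠ m) :
    i ∈ descSet (prefixPerm A hA σ) ↔ i ∈ descSet σ := by
  by_cases hi : 0 < i ∧ i < m + r
  swap
  · exact iff_of_false (fun h => hi (bounds_of_mem_descSet h))
      (fun h => hi (by have := bounds_of_mem_descSet h; omega))
  obtain ⟨h0, hi⟩ := hi
  rw [mem_descSet_iff_lt h0 hi]
  rcases lt_or_gt_of_ne him with him | him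
  · rw [mem_descSet_iff_lt h0 him]
    have e := prefixPerm_castAdd A hA σ
    exact e ⟨i, him⟩ ▸ e ⟨i - 1, by omega⟩ ▸ (A.orderEmbOfFin hA).lt_iff_lt
  · have e₁ := prefixPerm_natAdd A hA σ ⟨i - m, by omega⟩
    have e₂ := prefixPerm_natAdd A hA σ ⟨i - 1 - m, by omega⟩
    simp only [Fin.natAdd_mk, show m + (i - m) = i by omega,
      show m + (i - 1 - m) = i - 1 by omega] at e₁ e₂
    rw [e₁, e₂, iff_false_intro (notMem_descSet_of_le him.le), iff_false, not_lt]
    exact (Aᶜ.orderEmbOfFin _).monotone (Fin.mk_le_mk.2 (by omega))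

lemma descSet_prefixPerm_of_mem (h : m ∈ descSet (prefixPerm A hA σ)) :
    descSet (prefixPerm A hA σ) = insert m (descSet σ) := by
  ext i
  rcases eq_or_ne i m with rfl | hi
  · simpa using h
  · rw [mem_insert, mem_descSet_prefixPerm_of_ne hi, or_iff_right hi]

lemma descSet_prefixPerm_of_notMem (h : m ∉ descSet (prefixPerm A hA σ)) :
    descSet (prefixPerm A hA σ) = descSet σ := by
  ext i
  rcases eq_or_ne i m with rfl | hi
  · exact iff_of_false h (notMem_descSet_of_le le_rfl)
  · exact mem_descSet_prefixPerm_of_ne hi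

end PrefixPermProperties

lemma descSet_prefixPerm_mul_swap {j r : ℕ} {A : Finset (Fin (j + 1 + r))} {hA : #A = j + 1}
    {σ : Perm (Fin (j + 1))} (hr : 2 ≤ r) (hj : j ∉ descSet σ)
    (h : j + 1 ∉ descSet (prefixPerm A hA σ)) :
    descSet (prefixPerm A hA σ * swap ⟨j, by omega⟩ ⟨j + 1, by omega⟩) =
      insert (j + 1) (descSet σ) := by
  rw [descSet_mul_swap (by omega) ((mem_descSet_prefixPerm_of_ne (by omega)).not.2 hj) h
    ((mem_descSet_prefixPerm_of_ne (by omega)).not.2 (notMem_descSet_of_le (by omega))),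
    descSet_prefixPerm_of_notMem h]

theorem choose_mul_betaP_le_two_mul_betaP_insert {m n : ℕ} {I : Finset ℕ} (hm : 0 < m)
    (hmn : m + 2 ≤ n) (hI : m - 1 ∉ I) :
    n.choose m * betaP m I ≤ 2 * betaP n (insert m I) := by
  obtain ⟨r, rfl⟩ := Nat.exists_eq_add_of_le (le_of_add_le_left hmn)
  obtain ⟨j, rfl⟩ : ∃ j, m = j + 1 := ⟨m - 1, by omega⟩
  rw [Nat.add_sub_cancel] at hI
  let X := {A : Finset (Fin (j + 1 + r)) // #A = j + 1} × {σ : Perm (Fin (j + 1)) // descSet σ = I}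
  let π : X → Perm (Fin (j + 1 + r)) := fun x => prefixPerm x.1.1 x.1.2 x.2.1
  have hπ : Function.Injective π := fun x y h => by
    obtain ⟨hA, hσ⟩ := prefixPerm_inj.1 h
    exact Prod.ext (Subtype.ext hA) (Subtype.ext hσ)
  have hX : Nat.card X = (j + 1 + r).choose (j + 1) * betaP (j + 1) I := by
    rw [Nat.card_prod, Nat.card_eq_fintype_card, Fintype.card_finset_len, Fintype.card_fin]
    rfl
  have hdesc : Nat.card {x // j + 1 ∈ descSet (π x)} ≤ betaP (j + 1 + r) (insert (j + 1) I) :=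
    Nat.card_le_card_of_injective
      (fun x => ⟨π x.1, x.1.2.2 ▸ descSet_prefixPerm_of_mem x.2⟩)
      fun x y h => Subtype.ext (hπ (congrArg Subtype.val h))
  have hasc : Nat.card {x // j + 1 ∉ descSet (π x)} ≤ betaP (j + 1 + r) (insert (j + 1) I) := by
    let s : Perm (Fin (j + 1 + r)) := swap ⟨j, by omega⟩ ⟨j + 1, by omega⟩
    refine Nat.card_le_card_of_injective (fun x => ⟨π x.1 * s, ?_⟩)
      fun x y h => Subtype.ext (hπ (mul_right_cancel (congrArg Subtype.val h)))
    rw [← x.1.2.2]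
    exact descSet_prefixPerm_mul_swap (by omega) (by rwa [x.1.2.2]) x.2
  rw [← hX, ← Nat.card_congr (sumCompl fun x => j + 1 ∈ descSet (π x)), Nat.card_sum]
  omega

lemma betaP_zero_le_one (I : Finset ℕ) : betaP 0 I ≤ 1 :=
  Finite.card_le_one_iff_subsingleton.2 inferInstance

lemma betaP_empty_pos (n : ℕ) : 0 < betaP n ∅ :=
  Nat.card_pos_iff.2 ⟨⟨⟨1, descSet_one⟩⟩, inferInstance⟩

lemma mem_evensTo {i j : ℕ} : j ∈ evensTo i ↔ 2 ∣ j ∧ 2 ≤ j ∧ j ≤ 2 * i := by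
  simp only [evensTo, mem_image, mem_Icc]
  constructor
  · rintro ⟨l, hl, rfl⟩
    omega
  · rintro ⟨⟨l, rfl⟩, h⟩
    exact ⟨l, by omega, rfl⟩

lemma insert_evensTo_pred {k : ℕ} (hk : 0 < k) :
    insert (2 * k) (evensTo (k - 1)) = evensTo k := by
  ext j
  simp only [mem_insert, mem_evensTo]
  omega

/-- `betaP (2 * k) (evensTo (k - 1))` is `E_{2k}`: the up–down permutations of `[2k]` are those
with descent set `{2, 4, …, 2k - 2}`. -/
theorem betaP_evens_ge (n k : ℕ) (hkn : 2 * k ≤ n / 2) :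
    (1 / 2 : ℚ) * n.choose (2 * k) * betaP (2 * k) (evensTo (k - 1)) ≤
      betaP n (evensTo k) := by
  rcases Nat.eq_zero_or_pos k with rfl | hk
  · have h₀ : (betaP 0 (evensTo 0) : ℚ) ≤ 1 := by exact_mod_cast betaP_zero_le_one _
    have hn : (1 : ℚ) ≤ betaP n (evensTo 0) := by
      exact_mod_cast (show evensTo 0 = ∅ by decide) ▸ betaP_empty_pos n
    simp only [mul_zero, Nat.choose_zero_right, Nat.cast_one, mul_one]
    linarith
  · have key : (n.choose (2 * k) * betaP (2 * k) (evensTo (k - 1)) : ℚ) ≤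
        2 * betaP n (evensTo k) := by
      rw [← insert_evensTo_pred hk]
      exact_mod_cast choose_mul_betaP_le_two_mul_betaP_insert (by omega) (by omega)
        (by rw [mem_evensTo]; omega)
    linarith
end
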